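/- arXiv:1810.10984 — 2 statements merged into one kernel-verified Lean document; each statement's English description precedes it below -/
import Mathlib

section
/- Let R be a d×d real symmetric positive definite matrix with eigendecomposition R = V Λ Vᵀ (V orthogonal, eigenvalues λ_1 ≥ … ≥ λ_d > 0), let δ > 0, and set R_RR = R + δI. Define the objective functions J(x) = ½(x − x_b)ᵀB⁻¹(x − x_b) + ½(y − h(x))ᵀR⁻¹(y − h(x)) and J_RR(x) = ½(x − x_b)ᵀB⁻¹(x − x_b) + ½(y − h(x))ᵀR_RR⁻¹(y − h(x)). Then for every x, J_RR(x) = J(x) − ½(y − h(x))ᵀ V Λ_δ Vᵀ (y − h(x)), where Λ_δ is the diagonal matrix with entries Λ_δ(i,i) = δ/(λ_i(λ_i + δ)). -/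
/-!
An orthogonal change of basis `V` diagonalises `R` and `R + δI` simultaneously, so inverting
both and subtracting reduces to the scalar identity `λ⁻¹ - δ / (λ (λ + δ)) = (λ + δ)⁻¹`
on each eigenvalue.
-/

open Matrix

theorem inv_sub_div_mul_add {K : Type*} [Field K] {a δ : K} (ha : a ≠ 0) (haδ : a + δ ≠ 0) :
    a⁻¹ - δ / (a * (a + δ)) = (a + δ)⁻¹ := by
  field_simp
  ring

namespace Matrix

variable {m K : Type*} [Fintype m] [DecidableEq m] [Field K]

theorem inv_diagonal_of_ne_zero {f : m → K} (hf : ∀ i, f i ≠ 0) :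
    (diagonal f)⁻¹ = diagonal f⁻¹ :=
  inv_eq_right_inv <| by simp [diagonal_mul_diagonal, hf]

theorem inv_mul_diagonal_mul_transpose {V : Matrix m m K} (hV : V * Vᵀ = 1) {f : m → K}
    (hf : ∀ i, f i ≠ 0) : (V * diagonal f * Vᵀ)⁻¹ = V * diagonal f⁻¹ * Vᵀ := by
  rw [mul_inv_rev, mul_inv_rev, inv_eq_left_inv hV, inv_eq_right_inv hV,
    inv_diagonal_of_ne_zero hf, Matrix.mul_assoc]

theorem mul_diagonal_mul_transpose_add_smul_one {V : Matrix m m K} (hV : V * Vᵀ = 1)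
    (f : m → K) (c : K) :
    V * diagonal f * Vᵀ + c • 1 = V * diagonal (fun i => f i + c) * Vᵀ := by
  have hc : c • (1 : Matrix m m K) = V * diagonal (fun _ => c) * Vᵀ := by
    rw [← smul_one_eq_diagonal, Matrix.mul_smul, Matrix.mul_one, Matrix.smul_mul, hV]
  rw [hc, ← Matrix.add_mul, ← Matrix.mul_add, diagonal_add]

theorem mul_diagonal_mul_transpose_sub (V : Matrix m m K) (f g : m → K) :
    V * diagonal f * Vᵀ - V * diagonal g * Vᵀ = V * diagonal (f - g) * Vᵀ := by
  rw [← Matrix.sub_mul, ← Matrix.mul_sub, diagonal_sub]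
  rfl

theorem inv_add_smul_one_eq_inv_sub {V : Matrix m m K} (hV : V * Vᵀ = 1) {lam : m → K} {δ : K}
    (hlam : ∀ i, lam i ≠ 0) (hlamδ : ∀ i, lam i + δ ≠ 0) :
    (V * diagonal lam * Vᵀ + δ • 1)⁻¹
      = (V * diagonal lam * Vᵀ)⁻¹ - V * diagonal (fun i => δ / (lam i * (lam i + δ))) * Vᵀ := by
  rw [mul_diagonal_mul_transpose_add_smul_one hV, inv_mul_diagonal_mul_transpose hV hlamδ,
    inv_mul_diagonal_mul_transpose hV hlam, mul_diagonal_mul_transpose_sub]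
  congr 3
  ext i
  exact (inv_sub_div_mul_add (hlam i) (hlamδ i)).symm

end Matrix

theorem ridge_regression_objective_function_update_general
    {n d : ℕ} (R V : Matrix (Fin d) (Fin d) ℝ) (lam : Fin d → ℝ)
    (hV1 : V * Vᵀ = 1)
    (hpos : ∀ i, 0 < lam i)
    (hR : R = V * Matrix.diagonal lam * Vᵀ)
    (δ : ℝ) (hδ : 0 < δ)
    (B : Matrix (Fin n) (Fin n) ℝ)
    (xb : Fin n → ℝ) (y : Fin d → ℝ) (h : (Fin n → ℝ) → Fin d → ℝ)
    (J JRR : (Fin n → ℝ) → ℝ)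
    (hJ : J = fun x => (1 / 2) * ((x - xb) ⬝ᵥ B⁻¹.mulVec (x - xb))
        + (1 / 2) * ((y - h x) ⬝ᵥ R⁻¹.mulVec (y - h x)))
    (hJRR : JRR = fun x => (1 / 2) * ((x - xb) ⬝ᵥ B⁻¹.mulVec (x - xb))
        + (1 / 2) * ((y - h x) ⬝ᵥ
            (R + δ • (1 : Matrix (Fin d) (Fin d) ℝ))⁻¹.mulVec (y - h x))) :
    ∀ x, JRR x = J x - (1 / 2) * ((y - h x) ⬝ᵥ
      (V * Matrix.diagonal (fun i => δ / (lam i * (lam i + δ))) * Vᵀ).mulVec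
        (y - h x)) := by
  intro x
  subst hJ hJRR hR
  have hinv := inv_add_smul_one_eq_inv_sub hV1 (fun i => (hpos i).ne')
    (fun i => (add_pos (hpos i) hδ).ne')
  simp only [hinv, sub_mulVec, dotProduct_sub]
  ring

/-- applying ridge regression to the observation error covariance matrix
changes the 3D-Var objective function by subtracting
`½(y − h(x))ᵀ V Λ_δ Vᵀ (y − h(x))`, where `Λ_δ(i,i) = δ/(λᵢ(λᵢ+δ))`. -/
theorem ridge_regression_objective_function_update
    {n d : ℕ} (R V : Matrix (Fin d) (Fin d) ℝ) (lam : Fin d → ℝ)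
    (hV1 : V * Vᵀ = 1) (hV2 : Vᵀ * V = 1)
    (hdec : Antitone lam) (hpos : ∀ i, 0 < lam i)
    (hR : R = V * Matrix.diagonal lam * Vᵀ)
    (δ : ℝ) (hδ : 0 < δ)
    (B : Matrix (Fin n) (Fin n) ℝ) (hB : IsUnit B.det)
    (xb : Fin n → ℝ) (y : Fin d → ℝ) (h : (Fin n → ℝ) → Fin d → ℝ)
    (J JRR : (Fin n → ℝ) → ℝ)
    (hJ : J = fun x => (1 / 2) * ((x - xb) ⬝ᵥ B⁻¹.mulVec (x - xb))
        + (1 / 2) * ((y - h x) ⬝ᵥ R⁻¹.mulVec (y - h x)))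
    (hJRR : JRR = fun x => (1 / 2) * ((x - xb) ⬝ᵥ B⁻¹.mulVec (x - xb))
        + (1 / 2) * ((y - h x) ⬝ᵥ
            (R + δ • (1 : Matrix (Fin d) (Fin d) ℝ))⁻¹.mulVec (y - h x))) :
    ∀ x, JRR x = J x - (1 / 2) * ((y - h x) ⬝ᵥ
      (V * Matrix.diagonal (fun i => δ / (lam i * (lam i + δ))) * Vᵀ).mulVec
        (y - h x)) :=
  ridge_regression_objective_function_update_general R V lam hV1 hpos hR δ hδ B xb y h J JRR hJ hJRR
end

section
/- Let R be a d×d real symmetric positive definite matrix with eigendecomposition R = V Λ Vᵀ (V orthogonal, eigenvalues λ_1 ≥ … ≥ λ_d > 0), let T > 0, and set R_ME = V(Λ + Γ)Vᵀ with Γ(k,k) = max(T − λ_k, 0). Define J(x) = ½(x − x_b)ᵀB⁻¹(x − x_b) + ½(y − h(x))ᵀR⁻¹(y − h(x)) and J_ME(x) = ½(x − x_b)ᵀB⁻¹(x − x_b) + ½(y − h(x))ᵀR_ME⁻¹(y − h(x)). Then for every x, J_ME(x) = J(x) − ½(y − h(x))ᵀ V Γ̃ Vᵀ (y − h(x)),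 where Γ̃ is the diagonal matrix with Γ̃(i,i) = 0 if λ_i ≥ T and Γ̃(i,i) = (T − λ_i)/(T·λ_i) if λ_i < T. -/
/-!
Since `λ + max (T − λ) 0 = max λ T`, the reconditioned matrix is `R_ME = V diag(max λ T) Vᵀ`,
and conjugating by the orthogonal `V` commutes with inversion. Hence
`R⁻¹ − R_ME⁻¹ = V diag(λ⁻¹ − (max λ T)⁻¹) Vᵀ`, and `λ⁻¹ − T⁻¹ = (T − λ)/(Tλ)` when `λ < T`.
-/

open Matrix

namespace Matrix

variable {ι K : Type*} [Fintype ι] [DecidableEq ι] [Field K]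

theorem inv_diagonal_of_ne_zero_s12 {v : ι → K} (hv : ∀ i, v i ≠ 0) :
    (diagonal v)⁻¹ = diagonal fun i => (v i)⁻¹ := by
  refine inv_eq_left_inv ?_
  rw [diagonal_mul_diagonal, ← diagonal_one]
  exact congrArg diagonal (funext fun i => inv_mul_cancel₀ (hv i))

theorem inv_conj_of_transpose_mul_self {V : Matrix ι ι K} (hV : Vᵀ * V = 1)
    (A : Matrix ι ι K) : (V * A * Vᵀ)⁻¹ = V * A⁻¹ * Vᵀ := by
  rw [mul_inv_rev, mul_inv_rev, inv_eq_left_inv hV, inv_eq_right_inv hV, mul_assoc]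

end Matrix

theorem add_max_sub_zero {α : Type*} [AddCommGroup α] [LinearOrder α] [IsOrderedAddMonoid α]
    (a b : α) : a + max (b - a) 0 = max a b := by
  rw [← max_add_add_left, add_sub_cancel, add_zero, max_comm]

theorem inv_sub_inv_max_of_pos {a T : ℝ} (ha : 0 < a) (hT : 0 < T) :
    a⁻¹ - (max a T)⁻¹ = if T ≤ a then 0 else (T - a) / (T * a) := by
  split_ifs with hTa
  · rw [max_eq_left hTa, sub_self]
  · rw [max_eq_right (not_le.mp hTa).le]
    field_simp

theorem minimum_eigenvalue_objective_function_update_general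
    {n d : ℕ} (R V : Matrix (Fin d) (Fin d) ℝ) (lam : Fin d → ℝ)
    (hV2 : Vᵀ * V = 1)
    (hpos : ∀ i, 0 < lam i)
    (hR : R = V * Matrix.diagonal lam * Vᵀ)
    (T : ℝ) (hT : 0 < T)
    (RME : Matrix (Fin d) (Fin d) ℝ)
    (hRME : RME = V * (Matrix.diagonal lam
        + Matrix.diagonal fun k => max (T - lam k) 0) * Vᵀ)
    (B : Matrix (Fin n) (Fin n) ℝ)
    (xb : Fin n → ℝ) (y : Fin d → ℝ) (h : (Fin n → ℝ) → Fin d → ℝ)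
    (J JME : (Fin n → ℝ) → ℝ)
    (hJ : J = fun x => (1 / 2) * ((x - xb) ⬝ᵥ B⁻¹.mulVec (x - xb))
        + (1 / 2) * ((y - h x) ⬝ᵥ R⁻¹.mulVec (y - h x)))
    (hJME : JME = fun x => (1 / 2) * ((x - xb) ⬝ᵥ B⁻¹.mulVec (x - xb))
        + (1 / 2) * ((y - h x) ⬝ᵥ RME⁻¹.mulVec (y - h x))) :
    ∀ x, JME x = J x - (1 / 2) * ((y - h x) ⬝ᵥ
      (V * Matrix.diagonal
          (fun i => if T ≤ lam i then 0 else (T - lam i) / (T * lam i)) * Vᵀ).mulVec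
        (y - h x)) := by
  intro x
  have hRME_max : RME = V * diagonal (fun k => max (lam k) T) * Vᵀ := by
    simp only [hRME, diagonal_add, add_max_sub_zero]
  have hgap : R⁻¹ - RME⁻¹ = V * diagonal
      (fun i => if T ≤ lam i then 0 else (T - lam i) / (T * lam i)) * Vᵀ := by
    rw [hR, hRME_max, inv_conj_of_transpose_mul_self hV2, inv_conj_of_transpose_mul_self hV2,
      inv_diagonal_of_ne_zero_s12 fun i => (hpos i).ne',
      inv_diagonal_of_ne_zero_s12 fun i => (lt_max_of_lt_right hT).ne',
      ← sub_mul, ← mul_sub, diagonal_sub]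
    simp only [inv_sub_inv_max_of_pos (hpos _) hT]
  rw [hJ, hJME, ← hgap]
  simp only [sub_mulVec, dotProduct_sub]
  ring

/-- applying the minimum eigenvalue method to the observation error
covariance matrix changes the 3D-Var objective function by subtracting
`½(y − h(x))ᵀ V Γ̃ Vᵀ (y − h(x))`, where `Γ̃(i,i) = 0` if `λᵢ ≥ T` and
`Γ̃(i,i) = (T − λᵢ)/(T λᵢ)` if `λᵢ < T`. -/
theorem minimum_eigenvalue_objective_function_update
    {n d : ℕ} (R V : Matrix (Fin d) (Fin d) ℝ) (lam : Fin d → ℝ)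
    (hV1 : V * Vᵀ = 1) (hV2 : Vᵀ * V = 1)
    (hdec : Antitone lam) (hpos : ∀ i, 0 < lam i)
    (hR : R = V * Matrix.diagonal lam * Vᵀ)
    (T : ℝ) (hT : 0 < T)
    (RME : Matrix (Fin d) (Fin d) ℝ)
    (hRME : RME = V * (Matrix.diagonal lam
        + Matrix.diagonal fun k => max (T - lam k) 0) * Vᵀ)
    (B : Matrix (Fin n) (Fin n) ℝ) (hB : IsUnit B.det)
    (xb : Fin n → ℝ) (y : Fin d → ℝ) (h : (Fin n → ℝ) → Fin d → ℝ)
    (J JME : (Fin n → ℝ) → ℝ)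
    (hJ : J = fun x => (1 / 2) * ((x - xb) ⬝ᵥ B⁻¹.mulVec (x - xb))
        + (1 / 2) * ((y - h x) ⬝ᵥ R⁻¹.mulVec (y - h x)))
    (hJME : JME = fun x => (1 / 2) * ((x - xb) ⬝ᵥ B⁻¹.mulVec (x - xb))
        + (1 / 2) * ((y - h x) ⬝ᵥ RME⁻¹.mulVec (y - h x))) :
    ∀ x, JME x = J x - (1 / 2) * ((y - h x) ⬝ᵥ
      (V * Matrix.diagonal
          (fun i => if T ≤ lam i then 0 else (T - lam i) / (T * lam i)) * Vᵀ).mulVec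
        (y - h x)) :=
  minimum_eigenvalue_objective_function_update_general R V lam hV2 hpos hR T hT RME hRME B xb y h J
    JME hJ hJME
end
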